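/- arXiv:1211.5875 — 7 statements merged into one kernel-verified Lean document; each statement's English description precedes it below -/
import Mathlib

section
/- Let C be a rational polyhedral cone in R^n generated over R_{≥0} by finitely many integral vectors. Then the monoid S = C ∩ Z^n is finitely generated: there exist g_1, ..., g_t in Z^n such that S = g_1·Z_{≥0} + ... + g_t·Z_{≥0}. -/
/-- **Gordan's Lemma.** If `C` is the rational polyhedral cone in `ℝⁿ` generated over
`ℝ≥0` by finitely many integral vectors `v 0, …, v (k-1)`, then the monoid
`S = C ∩ ℤⁿ` is finitely generated: there are `g 1, …, g t` in `ℤⁿ` with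
`S = g 1 · ℤ≥0 + ⋯ + g t · ℤ≥0`. -/
theorem gordan_lemma (n k : ℕ) (v : Fin k → Fin n → ℤ) :
    ∃ (t : ℕ) (g : Fin t → Fin n → ℤ),
      {s : Fin n → ℤ |
          ∃ lam : Fin k → ℝ, (∀ i, 0 ≤ lam i) ∧
            (fun j => (s j : ℝ)) = ∑ i, lam i • (fun j => (v i j : ℝ))} =
        (AddSubmonoid.closure (Set.range g) : Set (Fin n → ℤ)) := by
  classical
  -- pointwise characterization of the defining equation
  have hpt : ∀ (s : Fin n → ℤ) (lam : Fin k → ℝ),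
      ((fun j => (s j : ℝ)) = ∑ i, lam i • (fun j => (v i j : ℝ))) ↔
        ∀ j, (s j : ℝ) = ∑ i, lam i * (v i j : ℝ) := by
    intro s lam
    constructor
    · intro h j
      have := congrFun h j
      simpa using this
    · intro h
      funext j
      simpa using h j
  set G := {s : Fin n → ℤ | ∃ lam : Fin k → ℝ, (∀ i, 0 ≤ lam i ∧ lam i ≤ 1) ∧
      (fun j => (s j : ℝ)) = ∑ i, lam i • (fun j => (v i j : ℝ))} with hGdef
  -- G is finite
  have hGfin : G.Finite := by
    have hsub : G ⊆ Set.Icc (fun j => -(∑ i, |v i j|)) (fun j => ∑ i, |v i j|) := by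
      rintro s ⟨lam, hlam, hs⟩
      rw [hpt] at hs
      have hb : ∀ j, |s j| ≤ ∑ i, |v i j| := by
        intro j
        have hR : |(s j : ℝ)| ≤ ∑ i, |(v i j : ℝ)| := by
          rw [hs j]
          calc |∑ i, lam i * (v i j : ℝ)| ≤ ∑ i, |lam i * (v i j : ℝ)| :=
                Finset.abs_sum_le_sum_abs _ _
            _ ≤ ∑ i, |(v i j : ℝ)| := by
                apply Finset.sum_le_sum
                intro i _
                rw [abs_mul]
                calc |lam i| * |(v i j : ℝ)| ≤ 1 * |(v i j : ℝ)| := by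
                      apply mul_le_mul_of_nonneg_right _ (abs_nonneg _)
                      rw [abs_of_nonneg (hlam i).1]
                      exact (hlam i).2
                  _ = |(v i j : ℝ)| := one_mul _
        exact_mod_cast hR
      simp only [Set.mem_Icc, Pi.le_def]
      constructor
      · intro j
        exact neg_le_of_abs_le (hb j)
      · intro j
        exact le_of_abs_le (hb j)
    exact (Set.finite_Icc _ _).subset hsub
  obtain ⟨t, g, hg⟩ := hGfin.fin_embedding
  refine ⟨t, g, ?_⟩
  rw [hg]
  -- the set S is an additive submonoid
  have Sadd : ∀ s₁ s₂ : Fin n → ℤ,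
      s₁ ∈ {s : Fin n → ℤ | ∃ lam : Fin k → ℝ, (∀ i, 0 ≤ lam i) ∧
        (fun j => (s j : ℝ)) = ∑ i, lam i • (fun j => (v i j : ℝ))} →
      s₂ ∈ {s : Fin n → ℤ | ∃ lam : Fin k → ℝ, (∀ i, 0 ≤ lam i) ∧
        (fun j => (s j : ℝ)) = ∑ i, lam i • (fun j => (v i j : ℝ))} →
      s₁ + s₂ ∈ {s : Fin n → ℤ | ∃ lam : Fin k → ℝ, (∀ i, 0 ≤ lam i) ∧
        (fun j => (s j : ℝ)) = ∑ i, lam i • (fun j => (v i j : ℝ))} := by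
    rintro s₁ s₂ ⟨l₁, hl₁, h₁⟩ ⟨l₂, hl₂, h₂⟩
    refine ⟨l₁ + l₂, fun i => add_nonneg (hl₁ i) (hl₂ i), ?_⟩
    rw [hpt] at h₁ h₂ ⊢
    intro j
    simp only [Pi.add_apply]
    push_cast
    rw [h₁ j, h₂ j, ← Finset.sum_add_distrib]
    apply Finset.sum_congr rfl
    intro i _
    simp [add_mul]
  set S' : AddSubmonoid (Fin n → ℤ) :=
    { carrier := {s : Fin n → ℤ | ∃ lam : Fin k → ℝ, (∀ i, 0 ≤ lam i) ∧
        (fun j => (s j : ℝ)) = ∑ i, lam i • (fun j => (v i j : ℝ))}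
      zero_mem' := by
        refine ⟨0, fun i => le_rfl, ?_⟩
        rw [hpt]
        intro j
        simp
      add_mem' := fun {a b} ha hb => Sadd a b ha hb } with hS'def
  -- each v i is in G
  have hv : ∀ i, v i ∈ G := by
    intro i
    refine ⟨fun i' => if i' = i then 1 else 0, ?_, ?_⟩
    · intro i'
      by_cases h : i' = i <;> simp [h]
    · rw [hpt]
      intro j
      simp [ite_mul, Finset.sum_ite_eq' Finset.univ i (fun i' => (v i' j : ℝ))]
  ext s
  constructor
  · rintro ⟨lam, hlam, hs⟩
    rw [hpt] at hs
    have hrG : (s - ∑ i, ⌊lam i⌋₊ • v i) ∈ G := by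
      refine ⟨fun i => lam i - ⌊lam i⌋₊, ?_, ?_⟩
      · intro i
        constructor
        · exact sub_nonneg.2 (Nat.floor_le (hlam i))
        · have := Nat.lt_floor_add_one (lam i)
          simp only
          linarith
      · rw [hpt]
        intro j
        have hrj : (((s - ∑ i, ⌊lam i⌋₊ • v i) j : ℤ) : ℝ)
            = (s j : ℝ) - ∑ i, (⌊lam i⌋₊ : ℝ) * (v i j : ℝ) := by
          simp only [Pi.sub_apply, Finset.sum_apply, Pi.smul_apply, smul_eq_mul,
            nsmul_eq_mul, Pi.mul_apply, Pi.natCast_apply]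
          push_cast
          ring
        rw [hrj, hs j, ← Finset.sum_sub_distrib]
        apply Finset.sum_congr rfl
        intro i _
        ring
    have hdecomp : s = (∑ i, ⌊lam i⌋₊ • v i) + (s - ∑ i, ⌊lam i⌋₊ • v i) := by
      abel
    rw [hdecomp]
    apply add_mem
    · apply AddSubmonoid.sum_mem
      intro i _
      exact AddSubmonoid.nsmul_mem _ (AddSubmonoid.subset_closure (hv i)) _
    · exact AddSubmonoid.subset_closure hrG
  · intro hs
    have hle : AddSubmonoid.closure G ≤ S' := by
      rw [AddSubmonoid.closure_le]
      rintro x ⟨lam, hlam, hx⟩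
      exact ⟨lam, fun i => (hlam i).1, hx⟩
    exact hle hs
end

section
/- Let g_1, ..., g_n be linearly independent vectors in Z^n generating a simplicial cone C over R_{≥0}, and let Z^o = {Σ c_i g_i : 0 ≤ c_i < 1} be the fundamental parallelepiped. Then the set (Z^o ∩ Z^n) ∪ {g_1, ..., g_n} generates the monoid C ∩ Z^n over Z_{≥0}. -/
/-!
A lattice point `s = ∑ cᵢ gᵢ` of the cone (`cᵢ ≥ 0`) splits as
`(s - ∑ ⌊cᵢ⌋ gᵢ) + ∑ ⌊cᵢ⌋ gᵢ`, where the first summand is again a lattice point and has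
coefficients `cᵢ - ⌊cᵢ⌋ ∈ [0, 1)`, so it lies in the half-open parallelepiped.
-/

section

variable (K : Type*) {E ι : Type*} [Ring K] [LinearOrder K]
  [AddCommGroup E] [Module K E] [Fintype ι]

def halfOpenParallelepiped (v : ι → E) : Set E :=
  {x | ∃ c : ι → K, (∀ i, 0 ≤ c i ∧ c i < 1) ∧ x = ∑ i, c i • v i}

variable [IsOrderedRing K]

def nonnegCone (v : ι → E) : AddSubmonoid E where
  carrier := {x | ∃ c : ι → K, (∀ i, 0 ≤ c i) ∧ x = ∑ i, c i • v i}
  zero_mem' := ⟨0, fun _ => le_rfl, by simp⟩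
  add_mem' := by
    rintro _ _ ⟨c, hc, rfl⟩ ⟨d, hd, rfl⟩
    exact ⟨c + d, fun i => add_nonneg (hc i) (hd i), by simp [add_smul, Finset.sum_add_distrib]⟩

variable {K}

lemma halfOpenParallelepiped_subset_nonnegCone (v : ι → E) :
    halfOpenParallelepiped K v ⊆ nonnegCone K v :=
  fun _ ⟨c, hc, hx⟩ => ⟨c, fun i => (hc i).1, hx⟩

lemma mem_nonnegCone_self [DecidableEq ι] (v : ι → E) (i : ι) : v i ∈ nonnegCone K v :=
  ⟨Pi.single i 1, Pi.single_nonneg.2 zero_le_one, by simp [Pi.single_apply, ite_smul]⟩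

lemma sum_smul_sub_sum_floor_smul_mem_halfOpenParallelepiped [FloorSemiring K]
    {v : ι → E} {c : ι → K} (hc : ∀ i, 0 ≤ c i) :
    ∑ i, c i • v i - ∑ i, ⌊c i⌋₊ • v i ∈ halfOpenParallelepiped K v := by
  refine ⟨fun i => c i - ⌊c i⌋₊, fun i => ⟨sub_nonneg.2 (Nat.floor_le (hc i)),
    sub_lt_iff_lt_add'.2 (Nat.lt_floor_add_one _)⟩, ?_⟩
  simp [sub_smul, Finset.sum_sub_distrib, Nat.cast_smul_eq_nsmul]

theorem closure_halfOpenParallelepiped_union_range_eq_comap_nonnegCone [FloorSemiring K]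
    {M : Type*} [AddCommGroup M] (f : M →+ E) (g : ι → M) :
    AddSubmonoid.closure (f ⁻¹' halfOpenParallelepiped K (f ∘ g) ∪ Set.range g) =
      (nonnegCone K (f ∘ g)).comap f := by
  classical
  apply le_antisymm
  · rw [AddSubmonoid.closure_le]
    rintro s (hs | ⟨i, rfl⟩)
    · exact halfOpenParallelepiped_subset_nonnegCone _ hs
    · exact mem_nonnegCone_self (f ∘ g) i
  · rintro s ⟨c, hc, hs⟩
    rw [← sub_add_cancel s (∑ i, ⌊c i⌋₊ • g i)]
    refine add_mem (AddSubmonoid.subset_closure (Set.mem_union_left _ ?_))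
      (sum_mem fun i _ => nsmul_mem
        (AddSubmonoid.subset_closure (Set.mem_union_right _ (Set.mem_range_self i))) _)
    have hfract := sum_smul_sub_sum_floor_smul_mem_halfOpenParallelepiped (v := f ∘ g) hc
    rw [← hs] at hfract
    simpa only [Set.mem_preimage, map_sub, map_sum, map_nsmul, Function.comp_apply] using hfract

end

theorem parallelepiped_generates_monoid_general (n : ℕ) (g : Fin n → Fin n → ℤ)
    (C : Set (Fin n → ℝ))
    (hC : C = {x | ∃ c : Fin n → ℝ, (∀ i, 0 ≤ c i) ∧
      x = ∑ i, c i • (fun j => (g i j : ℝ))})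
    (Zo : Set (Fin n → ℤ))
    (hZo : Zo = {s | ∃ c : Fin n → ℝ, (∀ i, 0 ≤ c i ∧ c i < 1) ∧
      (fun j => (s j : ℝ)) = ∑ i, c i • (fun j => (g i j : ℝ))}) :
    (AddSubmonoid.closure (Zo ∪ Set.range g) : Set (Fin n → ℤ)) =
      {s : Fin n → ℤ | (fun j => (s j : ℝ)) ∈ C} := by
  subst hC hZo
  exact congrArg SetLike.coe
    (closure_halfOpenParallelepiped_union_range_eq_comap_nonnegCone (K := ℝ)
      ((Int.castAddHom ℝ).compLeft (Fin n)) g)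

/-- If `g 0, …, g (n-1)` are linearly independent integral vectors generating a
simplicial cone `C` over `ℝ≥0`, with fundamental parallelepiped
`Z° = {Σ cᵢ gᵢ : 0 ≤ cᵢ < 1}`, then the lattice points of `Z°` together with the
`gᵢ` generate the monoid `C ∩ ℤⁿ` over `ℤ≥0`. -/
theorem parallelepiped_generates_monoid (n : ℕ) (g : Fin n → Fin n → ℤ)
    (hli : LinearIndependent ℝ (fun i => (fun j => (g i j : ℝ))))
    (C : Set (Fin n → ℝ))
    (hC : C = {x | ∃ c : Fin n → ℝ, (∀ i, 0 ≤ c i) ∧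
      x = ∑ i, c i • (fun j => (g i j : ℝ))})
    (Zo : Set (Fin n → ℤ))
    (hZo : Zo = {s | ∃ c : Fin n → ℝ, (∀ i, 0 ≤ c i ∧ c i < 1) ∧
      (fun j => (s j : ℝ)) = ∑ i, c i • (fun j => (g i j : ℝ))}) :
    (AddSubmonoid.closure (Zo ∪ Set.range g) : Set (Fin n → ℤ)) =
      {s : Fin n → ℤ | (fun j => (s j : ℝ)) ∈ C} :=
  parallelepiped_generates_monoid_general n g C hC Zo hZo
end

section
/- Let Δ be an integral convex polytope of dimension n in R^n containing the origin, simplicial at all origin-less facets, let D(Δ) be as usual, and let G ⊆ Δ ∩ Z^n contain the vertices and generate the monoid C(Δ) ∩ Z^n. Suppose v ∈ C(Δ) ∩ Z^n has a representation v = Σ_{j∈G} u_j·j with u_j ∈ Z_{≥0} and Σ_j u_j ≤ w_Δ(v) + n·D(Δ). Then for every j ∈ G not lying on any origin-less facet of Δ (i.e., with w_Δ(j) < 1), one has u_j ≤ n·D(Δ)². -/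
open scoped Pointwise

/-- Let `Δ ⊆ ℝⁿ` be an integral convex polytope of dimension `n` containing the
origin, simplicial at all origin-less facets, `D = D(Δ)` as usual, and let
`G ⊆ Δ ∩ ℤⁿ` contain the vertices and generate the monoid `C(Δ) ∩ ℤⁿ`. If a lattice
point `v` of `C(Δ)` has a representation `v = Σ_{j∈G} u_j • j` with `u_j ∈ ℤ≥0` and
`Σ u_j ≤ w_Δ(v) + n·D`, then for every `j ∈ G` not on an origin-less facet (i.e.
with `w_Δ(j) < 1`) one has `u_j ≤ n·D²`, a bound independent of `v`. -/
theorem coefficient_bound_independent_of_p (n : ℕ) (V : Finset (Fin n → ℤ))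
    (Δ : Set (Fin n → ℝ))
    (hΔ : Δ = convexHull ℝ ((fun v : Fin n → ℤ => fun i => (v i : ℝ)) '' V))
    (h0 : (0 : Fin n → ℝ) ∈ Δ)
    (hdim : (interior Δ).Nonempty)
    (C : Set (Fin n → ℝ))
    (hC : C = {x | ∃ (lam : ℝ) (y : Fin n → ℝ), 0 ≤ lam ∧ y ∈ Δ ∧ x = lam • y})
    (hsimp : ∀ c : Fin n → ℝ, (∀ x ∈ Δ, ∑ i, c i * x i ≤ 1) →
      ∃ (m : ℕ) (pts : Fin m → Fin n → ℝ), AffineIndependent ℝ pts ∧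
        {x ∈ Δ | ∑ i, c i * x i = 1} = convexHull ℝ (Set.range pts))
    (w : (Fin n → ℤ) → ℚ)
    (hw : ∀ v : Fin n → ℤ, (fun i => (v i : ℝ)) ∈ C →
      IsLeast {c : ℚ | 0 ≤ c ∧ (fun i => (v i : ℝ)) ∈ (c : ℝ) • Δ} (w v))
    (D : ℕ)
    (hD : IsLeast {d : ℕ | 0 < d ∧ ∀ v : Fin n → ℤ, (fun i => (v i : ℝ)) ∈ C →
      ∃ k : ℤ, w v = (k : ℚ) / d} D)
    (G : Finset (Fin n → ℤ))
    (hGΔ : ∀ j ∈ G, (fun i => (j i : ℝ)) ∈ Δ)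
    (hGvert : ∀ x ∈ Set.extremePoints ℝ Δ, ∃ j ∈ G, (fun i => (j i : ℝ)) = x)
    (hGgen : ∀ v : Fin n → ℤ, (fun i => (v i : ℝ)) ∈ C →
      ∃ u : (Fin n → ℤ) → ℕ, v = ∑ j ∈ G, (u j : ℤ) • j)
    (v : Fin n → ℤ) (hv : (fun i => (v i : ℝ)) ∈ C)
    (u : (Fin n → ℤ) → ℕ)
    (hrep : v = ∑ j ∈ G, (u j : ℤ) • j)
    (hbound : ((∑ j ∈ G, u j : ℕ) : ℚ) ≤ w v + n * D) :
    ∀ j ∈ G, w j < 1 → u j ≤ n * D ^ 2 := by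
  set f : (Fin n → ℤ) → (Fin n → ℝ) := fun a => fun i => (a i : ℝ) with hf
  have hfadd : ∀ a b, f (a + b) = f a + f b := by
    intro a b; funext i; simp [hf]
  have hconv : Convex ℝ Δ := by rw [hΔ]; exact convex_convexHull ℝ _
  -- membership in c • Δ implies membership in C
  have hmemC : ∀ (c : ℚ) (x : Fin n → ℝ), 0 ≤ c → x ∈ (c : ℝ) • Δ → x ∈ C := by
    intro c x hc hx
    obtain ⟨y, hy, rfl⟩ := hx
    rw [hC]
    exact ⟨(c : ℝ), y, by exact_mod_cast hc, hy, rfl⟩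
  -- 0 ∈ C
  have h0C : f 0 ∈ C := by
    rw [hC]
    exact ⟨0, 0, le_refl _, h0, by funext i; simp [hf]⟩
  -- w 0 = 0
  have hw0 : w 0 = 0 := by
    have h := hw 0 h0C
    have h0mem : (0:ℚ) ∈ {c : ℚ | 0 ≤ c ∧ f 0 ∈ (c : ℝ) • Δ} := by
      refine ⟨le_refl _, ?_⟩
      have : f 0 = (0 : Fin n → ℝ) := by funext i; simp [hf]
      rw [this]
      push_cast
      rw [Set.zero_smul_set ⟨_, h0⟩]
      exact rfl
    exact le_antisymm (h.2 h0mem) (h.1).1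
  -- subadditivity
  have hsub : ∀ a b : (Fin n → ℤ), f a ∈ C → f b ∈ C →
      f (a + b) ∈ C ∧ w (a + b) ≤ w a + w b := by
    intro a b ha hb
    obtain ⟨⟨ha0, haΔ⟩, _⟩ := hw a ha
    obtain ⟨⟨hb0, hbΔ⟩, _⟩ := hw b hb
    have hmem : f (a + b) ∈ ((w a + w b : ℚ) : ℝ) • Δ := by
      have := Set.add_mem_add haΔ hbΔ
      rw [← hconv.add_smul (by exact_mod_cast ha0) (by exact_mod_cast hb0)] at this
      rw [hfadd]
      push_cast
      convert this using 2
    have habC : f (a + b) ∈ C := hmemC _ _ (by positivity) hmem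
    refine ⟨habC, (hw _ habC).2 ⟨by positivity, hmem⟩⟩
  -- scaling
  have hsmul : ∀ (k : ℕ) (a : Fin n → ℤ), f a ∈ C →
      f (k • a) ∈ C ∧ w (k • a) ≤ (k : ℚ) * w a := by
    intro k a ha
    induction k with
    | zero => simpa [hw0] using h0C
    | succ m ih =>
      have hstep := hsub (m • a) a ih.1 ha
      rw [succ_nsmul a m]
      refine ⟨hstep.1, hstep.2.trans ?_⟩
      have h2 := ih.2
      push_cast
      nlinarith [ih.2]
  -- sum over a finset
  have hsum : ∀ s : Finset (Fin n → ℤ), (∀ j ∈ s, f j ∈ C) →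
      f (∑ j ∈ s, (u j : ℤ) • j) ∈ C ∧
      w (∑ j ∈ s, (u j : ℤ) • j) ≤ ∑ j ∈ s, (u j : ℚ) * w j := by
    intro s
    induction s using Finset.induction with
    | empty => intro _; simpa [hw0] using h0C
    | @insert a s' hx ih =>
      intro hs
      have ha : f a ∈ C := hs a (Finset.mem_insert_self a s')
      have ih' := ih (fun j hj => hs j (Finset.mem_insert_of_mem hj))
      rw [Finset.sum_insert hx, Finset.sum_insert hx]
      have haC : f ((u a : ℤ) • a) ∈ C ∧ w ((u a : ℤ) • a) ≤ (u a : ℚ) * w a := by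
        rw [natCast_zsmul]
        exact hsmul (u a) a ha
      have hstep := hsub _ _ haC.1 ih'.1
      exact ⟨hstep.1, hstep.2.trans (add_le_add haC.2 ih'.2)⟩
  -- G ⊆ C
  have hGC : ∀ j ∈ G, f j ∈ C := by
    intro j hj
    rw [hC]
    exact ⟨1, f j, zero_le_one, hGΔ j hj, (one_smul ℝ _).symm⟩
  -- w j ≤ 1 for j ∈ G
  have hwle1 : ∀ j ∈ G, w j ≤ 1 := by
    intro j hj
    refine (hw j (hGC j hj)).2 ⟨zero_le_one, ?_⟩
    push_cast
    rw [one_smul]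
    exact hGΔ j hj
  obtain ⟨⟨hDpos, hDdiv⟩, _⟩ := hD
  intro j hj hwj
  -- w j ≤ 1 - 1/D
  have hwjD : w j ≤ 1 - 1 / (D : ℚ) := by
    obtain ⟨k, hk⟩ := hDdiv j (hGC j hj)
    have hDQ : (0:ℚ) < (D:ℚ) := by exact_mod_cast hDpos
    rw [hk] at hwj ⊢
    rw [div_lt_one hDQ] at hwj
    have hkD : (k:ℚ) ≤ (D:ℚ) - 1 := by
      have : k < (D:ℤ) := by exact_mod_cast hwj
      have : k ≤ (D:ℤ) - 1 := by omega
      exact_mod_cast this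
    rw [div_le_iff₀ hDQ]
    calc (k:ℚ) ≤ (D:ℚ) - 1 := hkD
      _ = (1 - 1 / (D:ℚ)) * (D:ℚ) := by field_simp
  -- main estimate
  have hwv : w v ≤ ∑ i ∈ G, (u i : ℚ) * w i := by
    rw [hrep]; exact (hsum G hGC).2
  have hsplit : ∑ i ∈ G, (u i : ℚ) * w i ≤
      (u j : ℚ) * w j + ((∑ i ∈ G, u i : ℕ) : ℚ) - (u j : ℚ) := by
    rw [← Finset.add_sum_erase _ _ hj]
    have h1 : ∑ i ∈ G.erase j, (u i : ℚ) * w i ≤ ∑ i ∈ G.erase j, (u i : ℚ) := by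
      refine Finset.sum_le_sum fun i hi => ?_
      have := hwle1 i (Finset.mem_of_mem_erase hi)
      nlinarith [Nat.cast_nonneg (α := ℚ) (u i)]
    have h2 : ∑ i ∈ G.erase j, (u i : ℚ) = ((∑ i ∈ G, u i : ℕ) : ℚ) - (u j : ℚ) := by
      push_cast
      rw [← Finset.add_sum_erase _ _ hj]
      ring
    linarith
  have hDQ : (0:ℚ) < (D:ℚ) := by exact_mod_cast hDpos
  -- u j * (1 - w j) ≤ n * D
  have hkey : (u j : ℚ) * (1 - w j) ≤ (n : ℚ) * D := by linarith
  have : (u j : ℚ) * (1 / (D:ℚ)) ≤ (n:ℚ) * D := by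
    refine le_trans ?_ hkey
    have : (1 / (D:ℚ)) ≤ 1 - w j := by linarith
    nlinarith [Nat.cast_nonneg (α := ℚ) (u j)]
  have hfin : (u j : ℚ) ≤ (n : ℚ) * D ^ 2 := by
    rw [mul_one_div, div_le_iff₀ hDQ] at this
    calc (u j : ℚ) ≤ (n:ℚ) * D * D := this
      _ = (n:ℚ) * D ^ 2 := by ring
  exact_mod_cast hfin
end

section
/- Let Δ be an n-dimensional integral simplex in R^n pointed at the origin whose cone's Hilbert basis is contained in Δ (Δ is smooth simplex). Let g be a Hilbert basis element, d the largest positive integer with d·g ∈ Δ, and c a positive integer such that c·g lies in the fundamental parallelepiped Z^o(S) = {Σ α_i g_i : 0 ≤ α_i < 1} of the primitive generators g_1, ..., g_n. Then c/d < 2n, and consequently w_{Δ,Z}(c·g) ≤ 2n, where w_{Δ,Z} is the integral weight function supported on Δ ∩ Z^n. -/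
private theorem aux_hull_mem {n : ℕ} (d : Fin n → ℕ) (G : Fin n → Fin n → ℝ) (x : Fin n → ℝ) :
    x ∈ convexHull ℝ ({0} ∪ Set.range fun i => (d i : ℝ) • G i) ↔
    ∃ w : Fin n → ℝ, (∀ i, 0 ≤ w i) ∧ (∑ i, w i) ≤ 1 ∧ x = ∑ i, (w i * d i) • G i := by
  constructor
  · intro hx
    have hsub : convexHull ℝ ({0} ∪ Set.range fun i => (d i : ℝ) • G i) ⊆
        {x : Fin n → ℝ | ∃ w : Fin n → ℝ, (∀ i, 0 ≤ w i) ∧ (∑ i, w i) ≤ 1 ∧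
          x = ∑ i, (w i * d i) • G i} := by
      apply convexHull_min
      · intro y hy
        simp only [Set.mem_union, Set.mem_singleton_iff, Set.mem_range] at hy
        rcases hy with rfl | ⟨i, rfl⟩
        · exact ⟨0, fun i => le_refl 0, by simp, by simp⟩
        · refine ⟨fun k => if k = i then 1 else 0, fun k => by positivity, by simp, ?_⟩
          rw [Finset.sum_eq_single i]
          · simp
          · intro k _ hk; simp [hk]
          · intro h; exact absurd (Finset.mem_univ i) h
      · rintro x ⟨v, hv0, hv1, rfl⟩ y ⟨w, hw0, hw1, rfl⟩ a b ha hb hab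
        refine ⟨fun i => a * v i + b * w i,
          fun i => add_nonneg (mul_nonneg ha (hv0 i)) (mul_nonneg hb (hw0 i)), ?_, ?_⟩
        · have h1 : ∑ i, (a * v i + b * w i) = a * ∑ i, v i + b * ∑ i, w i := by
            rw [Finset.sum_add_distrib, ← Finset.mul_sum, ← Finset.mul_sum]
          rw [h1]
          nlinarith
        · rw [Finset.smul_sum, Finset.smul_sum, ← Finset.sum_add_distrib]
          refine Finset.sum_congr rfl fun i _ => ?_
          rw [smul_smul, smul_smul, ← add_smul]
          ring_nf
    exact hsub hx
  · rintro ⟨w, hw0, hw1, rfl⟩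
    have h : (∑ o : Option (Fin n), (Option.elim o (1 - ∑ i, w i) w) •
        (Option.elim o (0 : Fin n → ℝ) (fun i => (d i : ℝ) • G i))) ∈
        convexHull ℝ ({0} ∪ Set.range fun i => (d i : ℝ) • G i) := by
      apply Convex.sum_mem (convex_convexHull ℝ _)
      · rintro (_ | i) _
        · simpa using hw1
        · exact hw0 i
      · rw [Fintype.sum_option]; simp
      · rintro (_ | i) _
        · exact subset_convexHull ℝ _ (Or.inl rfl)
        · exact subset_convexHull ℝ _ (Or.inr ⟨i, rfl⟩)
    have heq : (∑ o : Option (Fin n), (Option.elim o (1 - ∑ i, w i) w) •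
        (Option.elim o (0 : Fin n → ℝ) (fun i => (d i : ℝ) • G i)))
        = ∑ i, (w i * d i) • G i := by
      rw [Fintype.sum_option]
      simp [smul_smul]
    rwa [heq] at h

/-- Let `Δ` be a smooth `n`-dimensional integral simplex in `ℝⁿ` pointed at the
origin (every Hilbert basis element of its cone lies in `Δ`), with nonzero vertices
`dᵢ • gᵢ` for primitive generators `gᵢ`. Let `g₀` be a Hilbert basis element, `dd`
the largest positive integer with `dd • g₀ ∈ Δ`, and `c` a positive integer with
`c • g₀` in the fundamental parallelepiped `Z°(S) = {Σ αᵢ gᵢ : 0 ≤ αᵢ < 1}`. Then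
`c/dd < 2n`, and consequently `w_{Δ,ℤ}(c • g₀) ≤ 2n`. -/
theorem smooth_simplex_parallelepiped_bound (n : ℕ)
    (g : Fin n → Fin n → ℤ) (d : Fin n → ℕ)
    (hd : ∀ i, 1 ≤ d i)
    (hprim : ∀ i, Finset.univ.gcd (g i) = 1)
    (hli : LinearIndependent ℝ (fun i => (fun j => (g i j : ℝ))))
    (Δ : Set (Fin n → ℝ))
    (hΔ : Δ = convexHull ℝ
      ({0} ∪ Set.range fun i => (d i : ℝ) • (fun j => (g i j : ℝ))))
    (C : Set (Fin n → ℝ))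
    (hC : C = {x | ∃ c : Fin n → ℝ, (∀ i, 0 ≤ c i) ∧
      x = ∑ i, c i • (fun j => (g i j : ℝ))})
    (S : Set (Fin n → ℤ)) (hS : S = {s | (fun j => (s j : ℝ)) ∈ C})
    (hsmooth : ∀ h : Fin n → ℤ, h ∈ S → h ≠ 0 →
      (¬∃ a ∈ S, ∃ b ∈ S, a ≠ 0 ∧ b ≠ 0 ∧ h = a + b) → (fun j => (h j : ℝ)) ∈ Δ)
    (g₀ : Fin n → ℤ) (hg₀S : g₀ ∈ S) (hg₀ne : g₀ ≠ 0)
    (hg₀hb : ¬∃ a ∈ S, ∃ b ∈ S, a ≠ 0 ∧ b ≠ 0 ∧ g₀ = a + b)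
    (dd : ℕ)
    (hdd : IsGreatest {m : ℕ | 0 < m ∧
      (fun j => (((m : ℤ) • g₀) j : ℝ)) ∈ Δ} dd)
    (c : ℕ) (hc : 0 < c)
    (hcZo : ∃ α : Fin n → ℝ, (∀ i, 0 ≤ α i ∧ α i < 1) ∧
      (fun j => (((c : ℤ) • g₀) j : ℝ)) = ∑ i, α i • (fun j => (g i j : ℝ))) :
    (c : ℚ) / (dd : ℚ) < 2 * n ∧
      ∃ (T : Finset (Fin n → ℤ)) (u : (Fin n → ℤ) → ℕ),
        (∀ j ∈ T, (fun i => (j i : ℝ)) ∈ Δ) ∧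
        (c : ℤ) • g₀ = ∑ j ∈ T, (u j : ℤ) • j ∧ (∑ j ∈ T, u j) ≤ 2 * n := by
  classical
  have hn : 0 < n := by
    by_contra h
    push_neg at h
    have hn0 : n = 0 := Nat.le_zero.mp h
    subst hn0
    exact hg₀ne (funext fun i => i.elim0)
  have hmem : ∀ x : Fin n → ℝ, x ∈ Δ ↔
      ∃ w : Fin n → ℝ, (∀ i, 0 ≤ w i) ∧ (∑ i, w i) ≤ 1 ∧
        x = ∑ i, (w i * d i) • (fun j => (g i j : ℝ)) := by
    intro x
    rw [hΔ]
    exact aux_hull_mem d (fun i j => (g i j : ℝ)) x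
  have huniq : ∀ a b : Fin n → ℝ,
      (∑ i, a i • (fun j => (g i j : ℝ))) = (∑ i, b i • (fun j => (g i j : ℝ))) → a = b := by
    intro a b hab
    have h0 : ∑ i ∈ Finset.univ, (a - b) i • (fun j => (g i j : ℝ)) = 0 := by
      simp only [Pi.sub_apply, sub_smul, Finset.sum_sub_distrib, hab, sub_self]
    have h1 := linearIndependent_iff'.mp hli Finset.univ (a - b) h0
    funext i
    have h2 := h1 i (Finset.mem_univ i)
    have h3 : a i - b i = 0 := h2
    linarith
  have hdpos : ∀ i, (0 : ℝ) < d i := by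
    intro i
    have : 0 < d i := hd i
    exact_mod_cast this
  -- representation of g₀
  have hg₀Δ := hsmooth g₀ hg₀S hg₀ne hg₀hb
  rw [hmem] at hg₀Δ
  obtain ⟨w0, hw00, hw01, hrep0⟩ := hg₀Δ
  set t : Fin n → ℝ := fun i => w0 i * d i with ht
  have ht0 : ∀ i, 0 ≤ t i := fun i => mul_nonneg (hw00 i) (le_of_lt (hdpos i))
  have hrep : (fun j => (g₀ j : ℝ)) = ∑ i, t i • (fun j => (g i j : ℝ)) := hrep0
  set s : ℝ := ∑ i, t i / d i with hs_def
  have hsum : ∀ m' : ℝ, (∑ i, m' * t i / d i) = m' * s := by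
    intro m'
    rw [hs_def, Finset.mul_sum]
    exact Finset.sum_congr rfl fun i _ => (mul_div_assoc _ _ _)
  have hmlhs : ∀ m : ℕ, (fun j => (((m : ℤ) • g₀) j : ℝ))
      = ∑ i, ((m : ℝ) * t i) • (fun j => (g i j : ℝ)) := by
    intro m
    have h1 : (fun j => (((m : ℤ) • g₀) j : ℝ)) = (m : ℝ) • (fun j => (g₀ j : ℝ)) := by
      funext j
      push_cast [Pi.smul_apply, smul_eq_mul]
      ring
    rw [h1, hrep, Finset.smul_sum]
    exact Finset.sum_congr rfl fun i _ => (smul_smul _ _ _)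
  have hchar : ∀ m : ℕ, ((fun j => (((m : ℤ) • g₀) j : ℝ)) ∈ Δ) ↔ (m : ℝ) * s ≤ 1 := by
    intro m
    rw [hmem, hmlhs m]
    constructor
    · rintro ⟨w, hw0, hw1, heq⟩
      have he := huniq _ _ heq
      have hms : (m : ℝ) * s = ∑ i, w i := by
        rw [← hsum (m : ℝ)]
        refine Finset.sum_congr rfl fun i _ => ?_
        have hei : (m : ℝ) * t i = w i * d i := congrFun he i
        rw [hei, mul_div_assoc, div_self (ne_of_gt (hdpos i)), mul_one]
      linarith
    · intro hms
      refine ⟨fun i => (m : ℝ) * t i / d i,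
        fun i => div_nonneg (mul_nonneg (Nat.cast_nonneg m) (ht0 i)) (le_of_lt (hdpos i)),
        ?_, ?_⟩
      · rw [hsum (m : ℝ)]; exact hms
      · refine Finset.sum_congr rfl fun i _ => ?_
        rw [div_mul_cancel₀ _ (ne_of_gt (hdpos i))]
  obtain ⟨α, hα01, hαrep⟩ := hcZo
  have hα : α = fun i => (c : ℝ) * t i := huniq _ _ (hαrep.symm.trans (hmlhs c))
  have hs_nonneg : 0 ≤ s :=
    Finset.sum_nonneg fun i _ => div_nonneg (ht0 i) (le_of_lt (hdpos i))
  have hs_pos : 0 < s := by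
    have hex : ∃ i, 0 < t i := by
      by_contra hno
      push_neg at hno
      have hteq : ∀ i, t i = 0 := fun i => le_antisymm (hno i) (ht0 i)
      have hz : (fun j => (g₀ j : ℝ)) = 0 := by
        rw [hrep]
        simp [hteq]
      apply hg₀ne
      funext j
      have h2 : (g₀ j : ℝ) = 0 := by simpa using congrFun hz j
      exact_mod_cast h2
    obtain ⟨i, hi⟩ := hex
    calc (0 : ℝ) < t i / d i := div_pos hi (hdpos i)
      _ ≤ s := Finset.single_le_sum
          (fun k _ => div_nonneg (ht0 k) (le_of_lt (hdpos k))) (Finset.mem_univ i)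
  obtain ⟨⟨hddpos, hddΔ⟩, hddub⟩ := hdd
  have hdds : (dd : ℝ) * s ≤ 1 := (hchar dd).mp hddΔ
  have hdd1 : 1 < ((dd : ℝ) + 1) * s := by
    by_contra hle
    push_neg at hle
    have h1 : dd + 1 ≤ dd := hddub ⟨Nat.succ_pos _, (hchar (dd + 1)).mpr (by push_cast; linarith)⟩
    omega
  have hsum_lt : (∑ i, α i) < n := by
    have h1 : (∑ i, α i) < ∑ _i : Fin n, (1 : ℝ) :=
      Finset.sum_lt_sum_of_nonempty (Finset.univ_nonempty_iff.mpr ⟨⟨0, hn⟩⟩)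
        (fun i _ => (hα01 i).2)
    simpa using h1
  have hcs : (c : ℝ) * s < n := by
    have h1 : (c : ℝ) * s = ∑ i, (c : ℝ) * t i / d i := (hsum (c : ℝ)).symm
    have h2 : ∀ i, (c : ℝ) * t i / d i ≤ α i := by
      intro i
      rw [hα]
      exact div_le_self (mul_nonneg (Nat.cast_nonneg c) (ht0 i)) (by exact_mod_cast hd i)
    calc (c : ℝ) * s = ∑ i, (c : ℝ) * t i / d i := h1
      _ ≤ ∑ i, α i := Finset.sum_le_sum fun i _ => h2 i
      _ < n := hsum_lt
  have hc' : (0 : ℝ) < c := by exact_mod_cast hc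
  have hkey : (c : ℝ) < 2 * n * dd := by
    have h3 : (c : ℝ) < (c : ℝ) * (((dd : ℝ) + 1) * s) := by
      calc (c : ℝ) = c * 1 := by ring
        _ < _ := mul_lt_mul_of_pos_left hdd1 hc'
    have h5 : ((dd : ℝ) + 1) * ((c : ℝ) * s) < ((dd : ℝ) + 1) * n :=
      mul_lt_mul_of_pos_left hcs (by positivity)
    have hdd1' : (1 : ℝ) ≤ dd := by exact_mod_cast hddpos
    have hn' : (0 : ℝ) ≤ n := Nat.cast_nonneg n
    nlinarith
  have hkeyN : c < 2 * n * dd := by exact_mod_cast hkey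
  have hddQ : (0 : ℚ) < dd := by exact_mod_cast hddpos
  constructor
  · rw [div_lt_iff₀ hddQ]
    exact_mod_cast hkeyN
  · set q := c / dd with hq
    set r := c % dd with hr
    have hcqr : c = q * dd + r := by
      rw [hq, hr, Nat.mul_comm]
      exact (Nat.div_add_mod c dd).symm
    have hq2n : q < 2 * n := Nat.div_lt_of_lt_mul (by rw [Nat.mul_comm dd (2 * n)]; exact hkeyN)
    rcases Nat.eq_zero_or_pos r with hr0 | hrpos
    · refine ⟨{(dd : ℤ) • g₀}, fun _ => q, ?_, ?_, ?_⟩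
      · intro j hj
        rw [Finset.mem_singleton] at hj
        subst hj
        exact hddΔ
      · rw [Finset.sum_singleton, smul_smul]
        have hcz : (c : ℤ) = (q : ℤ) * (dd : ℤ) := by
          have : c = q * dd := by omega
          exact_mod_cast this
        rw [hcz]
      · rw [Finset.sum_singleton]
        omega
    · have hrlt : r < dd := by
        rw [hr]; exact Nat.mod_lt c hddpos
      have hrs : (r : ℝ) * s ≤ 1 := by
        have hrd : (r : ℝ) ≤ dd := by exact_mod_cast le_of_lt hrlt
        nlinarith
      have hne : (dd : ℤ) • g₀ ≠ (r : ℤ) • g₀ := by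
        intro heq
        have hz : ((dd : ℤ) - r) • g₀ = 0 := by rw [sub_smul, heq, sub_self]
        have hddr : (dd : ℤ) - r ≠ 0 := by
          have : (r : ℤ) < dd := by exact_mod_cast hrlt
          omega
        rcases smul_eq_zero.mp hz with h | h
        · exact hddr h
        · exact hg₀ne h
      refine ⟨{(dd : ℤ) • g₀, (r : ℤ) • g₀},
        fun j => if j = (dd : ℤ) • g₀ then q else 1, ?_, ?_, ?_⟩
      · intro j hj
        rcases Finset.mem_insert.mp hj with rfl | hj
        · exact hddΔ
        · rw [Finset.mem_singleton] at hj
          subst hj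
          exact (hchar r).mpr hrs
      · rw [Finset.sum_pair hne]
        simp only [eq_self_iff_true, if_true, if_pos rfl, if_neg (show ¬((r : ℤ) • g₀ = (dd : ℤ) • g₀) from Ne.symm hne)]
        rw [smul_smul, Nat.cast_one, one_smul, ← add_smul]
        have hcz : (c : ℤ) = (q : ℤ) * (dd : ℤ) + (r : ℤ) := by exact_mod_cast hcqr
        rw [hcz]
      · rw [Finset.sum_pair hne]
        simp only [eq_self_iff_true, if_true, if_pos rfl, if_neg (show ¬((r : ℤ) • g₀ = (dd : ℤ) • g₀) from Ne.symm hne)]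
        omega
end

section
/- Let K be a field, a ≥ 1, and let M_0, M_1, ..., M_{a−1} be N×N matrices over K. Form the aN×aN block matrix M⃗ whose (i+1, i) block is M_i for 0 ≤ i ≤ a−2, whose (0, a−1) block is M_{a−1}, and which is zero elsewhere. Then det(I − T·M⃗) = det(I − T^a · M_{a−1} ⋯ M_1 M_0) as polynomials in K[T]. -/
/-!
Induction on the number of blocks, over any commutative ring. The last diagonal block of `1 - B`
is `1`, so its Schur complement gives `det (1 - B) = det (1 - B')` with `B'` block cyclic with one
block fewer: the two blocks entering and leaving the eliminated index are replaced by their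
product, which leaves the cyclic product `M_{a-1} ⋯ M_0` unchanged. The polynomial identity is
the case of the blocks `T • Mᵢ`, whose cyclic product is `Tᵃ` times that of the `Mᵢ`.
-/

open Polynomial

namespace List

variable {M : Type*} [Monoid M]

lemma prod_reverse_ofFn_succ {a : ℕ} (f : Fin (a + 1) → M) :
    (ofFn f).reverse.prod = f (Fin.last a) * (ofFn fun i => f i.castSucc).reverse.prod := by
  rw [ofFn_succ']
  simp only [concat_eq_append, reverse_append, reverse_singleton, singleton_append, prod_cons]

lemma prod_reverse_ofFn_smul {S : Type*} [Monoid S] [MulAction S M] [IsScalarTower S M M]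
    [SMulCommClass S M M] {a : ℕ} (c : S) (f : Fin a → M) :
    (ofFn fun i => c • f i).reverse.prod = c ^ a • (ofFn f).reverse.prod := by
  simpa [map_reverse, map_ofFn, Function.comp_def] using (smul_prod (ofFn f).reverse c).symm

end List

namespace Matrix

variable {α R n : Type*}

def blockCyclic [Zero α] {a : ℕ} [NeZero a] (M : Fin a → Matrix n n α) :
    Matrix (Fin a × n) (Fin a × n) α :=
  of fun p q => if p.1 = q.1 + 1 then M q.1 p.2 q.2 else 0

@[simp]
lemma blockCyclic_apply [Zero α] {a : ℕ} [NeZero a] (M : Fin a → Matrix n n α) (i j : Fin a)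
    (r s : n) : blockCyclic M (i, r) (j, s) = if i = j + 1 then M j r s else 0 :=
  rfl

lemma smul_blockCyclic [Zero α] [SMulZeroClass R α] {a : ℕ} [NeZero a] (c : R)
    (M : Fin a → Matrix n n α) : c • blockCyclic M = blockCyclic fun i => c • M i := by
  ext ⟨i, r⟩ ⟨j, s⟩
  simp [smul_ite]

variable [Fintype n] [DecidableEq n] [CommRing R]

lemma det_one_sub_blockCyclic_one (M : Fin 1 → Matrix n n R) :
    det (1 - blockCyclic M) = det (1 - M 0) := by
  rw [← det_reindex_self (Equiv.uniqueProd n (Fin 1))]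
  congr 1
  ext r s
  simp [one_apply]

lemma det_one_sub_blockCyclic_succ {a : ℕ} (M : Fin (a + 2) → Matrix n n R) :
    det (1 - blockCyclic M) = det (1 - blockCyclic
      (Fin.snoc (fun i : Fin a => M i.castSucc.castSucc)
        (M (Fin.last _) * M (Fin.last a).castSucc))) := by
  let e : Fin (a + 2) × n ≃ (Fin (a + 1) × n) ⊕ (Fin 1 × n) :=
    ((finSumFinEquiv (m := a + 1) (n := 1)).symm.prodCongr (Equiv.refl n)).trans
      (Equiv.sumProdDistrib _ _ _)
  have he₁ (p : Fin (a + 1)) (r : n) : e.symm (.inl (p, r)) = (p.castSucc, r) := rfl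
  have he₂ (i : Fin 1) (r : n) : e.symm (.inr (i, r)) = (Fin.last _, r) := by
    simp [e, Fin.ext_iff, Subsingleton.elim i 0]
  have h₂₂ : (reindex e e (1 - blockCyclic M)).toBlocks₂₂ = 1 := by
    ext ⟨i, r⟩ ⟨j, s⟩
    simp [toBlocks₂₂, he₂, one_apply, Subsingleton.elim i j]
  rw [← det_reindex_self e, ← fromBlocks_toBlocks (reindex e e _), h₂₂, det_fromBlocks_one₂₂]
  congr 1
  ext ⟨p, r⟩ ⟨q, s⟩
  induction q using Fin.lastCases with
  | last =>
    by_cases hp : p = 0 <;>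
      simp [toBlocks₁₁, toBlocks₁₂, toBlocks₂₁, mul_apply, he₁, he₂, one_apply, hp,
        (Fin.castSucc_ne_last _).symm, Fintype.sum_prod_type]
  | cast j =>
    simp [toBlocks₁₁, toBlocks₁₂, toBlocks₂₁, mul_apply, he₁, he₂, one_apply,
      (Fin.castSucc_ne_last _).symm, ← Fin.castSucc_succ]

theorem det_one_sub_blockCyclic {a : ℕ} (M : Fin (a + 1) → Matrix n n R) :
    det (1 - blockCyclic M) = det (1 - (List.ofFn M).reverse.prod) := by
  induction a with
  | zero => simp [det_one_sub_blockCyclic_one]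
  | succ a ih =>
    rw [det_one_sub_blockCyclic_succ, ih, List.prod_reverse_ofFn_succ,
      List.prod_reverse_ofFn_succ M, List.prod_reverse_ofFn_succ (fun i => M i.castSucc)]
    simp only [Fin.snoc_last, Fin.snoc_castSucc, mul_assoc]

end Matrix

open Matrix

/-- Let `K` be a field, `a ≥ 1`, and `M₀, …, M_{a−1}` be `N×N` matrices over `K`.
For the `aN × aN` block matrix `B` whose `(i+1, i)` block is `Mᵢ` (indices mod `a`,
so the `(0, a−1)` block is `M_{a−1}`) and which vanishes elsewhere,
`det(I − T·B) = det(I − Tᵃ · M_{a−1} ⋯ M₁ M₀)` in `K[T]`. -/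
theorem block_cyclic_det (K : Type*) [Field K] (a N : ℕ) [NeZero a]
    (M : Fin a → Matrix (Fin N) (Fin N) K)
    (B : Matrix (Fin a × Fin N) (Fin a × Fin N) K)
    (hB : ∀ (i j : Fin a) (r s : Fin N),
      B (i, r) (j, s) = if i = j + 1 then M j r s else 0) :
    Matrix.det (1 - (Polynomial.X : Polynomial K) • B.map Polynomial.C) =
      Matrix.det (1 - ((Polynomial.X : Polynomial K) ^ a) •
        ((List.ofFn M).reverse.prod).map Polynomial.C) := by
  obtain ⟨a, rfl⟩ := Nat.exists_eq_add_one_of_ne_zero (NeZero.ne a)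
  have hB' : B.map C = blockCyclic fun i => (M i).map C := by
    ext ⟨i, r⟩ ⟨j, s⟩
    simp [hB, apply_ite C]
  have hprod :
      ((List.ofFn M).reverse.prod).map C = (List.ofFn fun i => (M i).map C).reverse.prod := by
    rw [← RingHom.mapMatrix_apply, map_list_prod, List.map_reverse, List.map_ofFn]
    rfl
  rw [hB', smul_blockCyclic, det_one_sub_blockCyclic, List.prod_reverse_ofFn_smul, hprod]
end

section
/- Let u_0, ..., u_{a−1} be linear endomorphism data on finite-dimensional vector spaces E_0, ..., E_{a−1} over a field K, with u_i : E_i → E_{i+1} (indices mod a), all E_i of the same dimension. Let E = E_0 ⊕ ⋯ ⊕ E_{a−1} and u : E → E the map with u|_{E_i} = u_i. Then the reverse characteristic polynomial satisfies det(1 − u·T) = det(1 − (u_{a−1}∘⋯∘u_1∘u_0)·T^a). -/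
/-!
Choosing bases, `u` becomes the block matrix `C` with blocks `Aⱼ` at `(j + 1, j)`, and `w` becomes
the cyclic product `A_{a-1} ⋯ A₀`, which is the `(0, 0)` block of `Cᵃ`. As
`(∑_{k<a} Cᵏ) (1 - C) = 1 - Cᵃ`, multiplying `1 - C` on the left by the block upper unitriangular
matrix whose row `0` is that of `∑_{k<a} Cᵏ` replaces row `0` of `1 - C` by row `0` of `1 - Cᵃ`,
namely `(1 - A_{a-1} ⋯ A₀, 0, …, 0)`. The result is block lower triangular, so
`det (1 - C) = det (1 - A_{a-1} ⋯ A₀)`. Applied to `X • C`, whose cyclic product is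
`Xᵃ • A_{a-1} ⋯ A₀`, this is the claim.
-/

open Matrix Polynomial Finset

theorem Fin.lt_of_eq_add_one {a : ℕ} [NeZero a] {i j : Fin a} (hi : i ≠ 0) (h : i = j + 1) :
    j < i := by
  obtain ⟨m, rfl⟩ := Nat.exists_eq_succ_of_ne_zero (NeZero.ne a)
  subst h
  exact Fin.lt_add_one_iff.2 <| (Fin.le_last j).lt_of_ne fun hj => hi (hj ▸ Fin.last_add_one m)

namespace Matrix

section Block

variable {ι n R : Type*} [Fintype n] [DecidableEq n] [CommRing R]

theorem charpolyRev_comp (M : Matrix n n R) (p : R[X]) :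
    M.charpolyRev.comp p = det (1 - p • M.map C) := by
  rw [charpolyRev, comp_eq_aeval, AlgHom.map_det]
  congr 1
  ext i j : 1
  by_cases h : i = j <;> simp [h, mul_comm p]

theorem det_comp_of_blockTriangular [Fintype ι] [DecidableEq ι] {α : Type*} [Fintype α]
    [LinearOrder α] {M : Matrix ι ι (Matrix n n R)} {b : ι → α} (hb : Function.Injective b)
    (hM : M.BlockTriangular b) : (comp ι ι n n R M).det = ∏ i, (M i i).det := by
  classical
  rw [hM.comp.det_fintype]
  refine (Fintype.prod_of_injective b hb _ _ (fun k hk => ?_) fun i => ?_).symm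
  · have : IsEmpty {p : ι × n // b p.1 = k} := ⟨fun p => hk ⟨_, p.2⟩⟩
    exact det_isEmpty
  · let e : {p : ι × n // b p.1 = b i} ≃ n :=
      { toFun := fun p => p.1.2
        invFun := fun x => ⟨(i, x), rfl⟩
        left_inv := fun ⟨⟨j, x⟩, hj⟩ => by obtain rfl := hb hj; rfl
        right_inv := fun _ => rfl }
    rw [← det_submatrix_equiv_self e.symm]
    rfl

end Block

section Cyclic

open Fin.CommRing

variable {n R : Type*} {a : ℕ} [NeZero a]

def cyclicBlock [Zero R] (A : Fin a → Matrix n n R) : Matrix (Fin a) (Fin a) (Matrix n n R) :=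
  of fun i j => if i = j + 1 then A j else 0

theorem cyclicBlock_apply [Zero R] (A : Fin a → Matrix n n R) (i j : Fin a) :
    cyclicBlock A i j = if i = j + 1 then A j else 0 := rfl

theorem cyclicBlock_apply_eq_zero_of_le [Zero R] (A : Fin a → Matrix n n R) {i j : Fin a}
    (hi : i ≠ 0) (hij : i ≤ j) : cyclicBlock A i j = 0 :=
  if_neg fun h => (Fin.lt_of_eq_add_one hi h).not_ge hij

variable [Fintype n] [DecidableEq n]

section Semiring

variable [Semiring R] (A : Fin a → Matrix n n R)

/-- `cycleProd A i k = A (i + k - 1) * ⋯ * A (i + 1) * A i`. -/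
def cycleProd (i : Fin a) : ℕ → Matrix n n R
  | 0 => 1
  | k + 1 => A (i + k) * cycleProd i k

theorem cyclicBlock_pow_apply (k : ℕ) (i j : Fin a) :
    (cyclicBlock A ^ k) i j = if i = j + k then cycleProd A j k else 0 := by
  induction k generalizing i with
  | zero => simp [cycleProd, one_apply, eq_comm]
  | succ k ih =>
    rw [pow_succ', mul_apply, Finset.sum_eq_single (i - 1)]
    · rw [cyclicBlock_apply, if_pos (sub_add_cancel i 1).symm, ih, cycleProd]
      push_cast
      by_cases h : i = j + (k + 1)
      · rw [if_pos (by linear_combination h), if_pos h, (by linear_combination h : i - 1 = j + k)]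
      · rw [if_neg (fun h' => h (by linear_combination h')), if_neg h, mul_zero]
    · intro m _ hm
      rw [cyclicBlock_apply, if_neg (fun h => hm (eq_sub_of_add_eq h.symm)), zero_mul]
    · simp

theorem sum_range_cyclicBlock_pow_apply_zero_zero :
    (∑ k ∈ range a, cyclicBlock A ^ k) 0 0 = 1 := by
  rw [sum_apply, sum_eq_single 0]
  · simp
  · intro k hk hk0
    rw [cyclicBlock_pow_apply, if_neg]
    rw [zero_add, eq_comm, Fin.natCast_eq_zero]
    exact fun h => hk0 (Nat.eq_zero_of_dvd_of_lt h (mem_range.1 hk))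
  · exact fun h => absurd (mem_range.2 (NeZero.pos a)) h

theorem cycleProd_map {S : Type*} [Semiring S] (f : R →+* S) (i : Fin a) (k : ℕ) :
    cycleProd (fun j => (A j).map f) i k = (cycleProd A i k).map f := by
  induction k with
  | zero => simp [cycleProd]
  | succ k ih => simp [cycleProd, ih, Matrix.map_mul]

end Semiring

theorem cycleProd_smul [CommSemiring R] (A : Fin a → Matrix n n R) (r : R) (i : Fin a) (k : ℕ) :
    cycleProd (fun j => r • A j) i k = r ^ k • cycleProd A i k := by
  induction k with
  | zero => simp [cycleProd]
  | succ k ih => rw [cycleProd, cycleProd, ih, smul_mul_smul_comm, pow_succ']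

variable [CommRing R]

theorem det_comp_updateRow_one_zero (r : Fin a → Matrix n n R) :
    (comp _ _ _ _ _ (updateRow (1 : Matrix (Fin a) (Fin a) (Matrix n n R)) 0 r)).det =
      (r 0).det := by
  rw [det_comp_of_blockTriangular (b := id) Function.injective_id, Fintype.prod_eq_single 0]
  · simp
  · intro i hi
    simp [updateRow_ne hi]
  · intro i j (hji : j < i)
    rw [updateRow_ne ((Fin.zero_le j).trans_lt hji).ne']
    exact one_apply_ne hji.ne'

theorem det_comp_updateRow_one_sub_cyclicBlock (A : Fin a → Matrix n n R) :
    (comp _ _ _ _ _ (updateRow (1 - cyclicBlock A) 0 ((1 - cyclicBlock A ^ a) 0))).det =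
      (1 - cycleProd A 0 a).det := by
  have hpow : ∀ j, (cyclicBlock A ^ a) 0 j = if j = 0 then cycleProd A 0 a else 0 := by
    simp +contextual [cyclicBlock_pow_apply, eq_comm]
  rw [det_comp_of_blockTriangular (b := OrderDual.toDual) OrderDual.toDual.injective,
    Fintype.prod_eq_single 0]
  · simp [hpow]
  · intro i hi
    simp [updateRow_ne hi, cyclicBlock_apply_eq_zero_of_le A hi le_rfl]
  · intro i j (hij : i < j)
    rcases eq_or_ne i 0 with rfl | hi
    · simp [hpow, one_apply_ne hij.ne, hij.ne']
    · simp [updateRow_ne hi, one_apply_ne hij.ne, cyclicBlock_apply_eq_zero_of_le A hi hij.le]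

theorem det_comp_one_sub_cyclicBlock (A : Fin a → Matrix n n R) :
    (comp _ _ _ _ _ (1 - cyclicBlock A)).det = (1 - cycleProd A 0 a).det := by
  have h : updateRow 1 0 ((∑ k ∈ range a, cyclicBlock A ^ k) 0) * (1 - cyclicBlock A) =
      updateRow (1 - cyclicBlock A) 0 ((1 - cyclicBlock A ^ a) 0) := by
    rw [updateRow_mul, one_mul, ← geom_sum_mul_neg]
    rfl
  simpa only [map_mul, det_mul, compRingEquiv_apply, det_comp_updateRow_one_zero,
    sum_range_cyclicBlock_pow_apply_zero_zero, det_one, one_mul,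
    det_comp_updateRow_one_sub_cyclicBlock] using
    congrArg (fun M => (compRingEquiv (Fin a) n R M).det) h

theorem charpolyRev_comp_cyclicBlock (A : Fin a → Matrix n n R) :
    (comp _ _ _ _ _ (cyclicBlock A)).charpolyRev = (cycleProd A 0 a).charpolyRev.comp (X ^ a) := by
  have hX : (X : R[X]) • (cyclicBlock A).map (·.map C) =
      cyclicBlock fun j => (X : R[X]) • (A j).map C := by
    ext i j : 1
    rw [smul_apply, map_apply, cyclicBlock_apply, cyclicBlock_apply]
    split_ifs <;> simp
  have h : 1 - (X : R[X]) • (comp _ _ _ _ _ (cyclicBlock A)).map C =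
      comp _ _ _ _ _ (1 - cyclicBlock fun j => (X : R[X]) • (A j).map C) := by
    rw [← hX, ← compRingEquiv_apply (Fin a) n R[X], map_sub, map_one]
    rfl
  rw [charpolyRev_comp, charpolyRev, h, det_comp_one_sub_cyclicBlock, cycleProd_smul,
    cycleProd_map]

end Cyclic

end Matrix

namespace LinearMap

open Module

variable {R : Type*} [CommSemiring R]

theorem toMatrix_piBasis_reindex {ι κ : Type*} [Fintype ι] [DecidableEq ι] [Fintype κ]
    [DecidableEq κ] {E : ι → Type*} [∀ i, AddCommMonoid (E i)] [∀ i, Module R (E i)]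
    (bs : ∀ i, Basis κ R (E i)) (f : (∀ i, E i) →ₗ[R] ∀ i, E i) :
    toMatrix ((Pi.basis bs).reindex (Equiv.sigmaEquivProd ι κ))
        ((Pi.basis bs).reindex (Equiv.sigmaEquivProd ι κ)) f =
      Matrix.comp ι ι κ κ R (of fun i j => toMatrix (bs j) (bs i) (proj i ∘ₗ f ∘ₗ single R E j)) := by
  ext ⟨i, x⟩ ⟨j, y⟩
  simp [toMatrix_apply]

theorem toMatrix_piBasis_reindex_eq_comp_cyclicBlock {κ : Type*} [Fintype κ] [DecidableEq κ]
    {a : ℕ} [NeZero a] {E : Fin a → Type*} [∀ i, AddCommMonoid (E i)] [∀ i, Module R (E i)]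
    (bs : ∀ i, Basis κ R (E i)) (uf : ∀ i : Fin a, E i →ₗ[R] E (i + 1))
    (u : (∀ i, E i) →ₗ[R] (∀ i, E i)) (hu : ∀ (x : ∀ i, E i) (i : Fin a), u x (i + 1) = uf i (x i)) :
    toMatrix ((Pi.basis bs).reindex (Equiv.sigmaEquivProd (Fin a) κ))
        ((Pi.basis bs).reindex (Equiv.sigmaEquivProd (Fin a) κ)) u =
      Matrix.comp _ _ _ _ _ (cyclicBlock fun j => toMatrix (bs j) (bs (j + 1)) (uf j)) := by
  rw [toMatrix_piBasis_reindex]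
  congr 1
  ext i j : 1
  obtain ⟨i, rfl⟩ : ∃ i', i = i' + 1 := ⟨i - 1, (sub_add_cancel i 1).symm⟩
  rw [of_apply, cyclicBlock_apply]
  by_cases hij : j = i
  · subst hij
    rw [if_pos rfl]
    congr 1
    ext x
    simp [hu]
  · rw [if_neg fun h => hij (add_right_cancel h).symm]
    convert map_zero (toMatrix (bs j) (bs (i + 1)))
    ext x
    simp [hu, Ne.symm hij]

end LinearMap

open LinearMap Module

/-- Let `E₀, …, E_{a−1}` be finite-dimensional vector spaces of equal dimension over
a field `K`, `uf i : E i →ₗ E (i+1)` (indices mod `a`), `E = E₀ ⊕ ⋯ ⊕ E_{a−1}` and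
`u : E →ₗ E` the map with `u|_{Eᵢ} = uf i`. Then the reverse characteristic
polynomial satisfies `det(1 − u·T) = det(1 − (uf_{a−1} ∘ ⋯ ∘ uf₀)·Tᵃ)`, where the
composite is realized as `π₀ ∘ uᵃ ∘ ι₀ : E₀ →ₗ E₀`. -/
theorem skew_cyclic_rev_charpoly (K : Type*) [Field K] (a : ℕ) [NeZero a]
    (E : Fin a → Type*) [∀ i, AddCommGroup (E i)] [∀ i, Module K (E i)]
    [∀ i, FiniteDimensional K (E i)]
    (hdim : ∀ i j, Module.finrank K (E i) = Module.finrank K (E j))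
    (uf : ∀ i : Fin a, E i →ₗ[K] E (i + 1))
    (u : (∀ i, E i) →ₗ[K] (∀ i, E i))
    (hu : ∀ (x : ∀ i, E i) (i : Fin a), u x (i + 1) = uf i (x i))
    (w : E 0 →ₗ[K] E 0)
    (hw : w = (LinearMap.proj 0).comp ((u ^ a).comp (LinearMap.single K E 0))) :
    (LinearMap.charpoly u).reverse =
      ((LinearMap.charpoly w).reverse).comp (Polynomial.X ^ a) := by
  classical
  let bs : ∀ i, Basis (Fin (finrank K (E 0))) K (E i) :=
    fun i => (finBasis K (E i)).reindex (finCongr (hdim i 0))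
  let B := (Pi.basis bs).reindex (Equiv.sigmaEquivProd (Fin a) (Fin (finrank K (E 0))))
  let A := fun i => toMatrix (bs i) (bs (i + 1)) (uf i)
  have hu' : toMatrix B B u = Matrix.comp _ _ _ _ _ (cyclicBlock A) :=
    toMatrix_piBasis_reindex_eq_comp_cyclicBlock bs uf u hu
  have hw' : toMatrix (bs 0) (bs 0) w = cycleProd A 0 a := by
    have h := toMatrix_piBasis_reindex bs (u ^ a)
    rw [← toMatrix_pow, hu', ← compRingEquiv_apply, ← map_pow, compRingEquiv_apply] at h
    simpa [hw, cyclicBlock_pow_apply] using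
      (congrFun (congrFun ((Matrix.comp _ _ _ _ _).injective h) 0) 0).symm
  rw [← charpoly_toMatrix u B, ← charpoly_toMatrix w (bs 0), reverse_charpoly, reverse_charpoly,
    hu', hw']
  exact charpolyRev_comp_cyclicBlock A
end

section
/- Let E(x) = exp(Σ_{i≥0} x^{p^i}/p^i) be the p-adic Artin–Hasse exponential and γ a root of log E(x) = 0 with ord_p(γ) = 1/(p−1). Write E(γx) = Σ_{m≥0} λ_m x^m. Then ord_p(λ_m) ≥ m/(p−1) for all m ≥ 0, and λ_m = γ^m/m! for 0 ≤ m ≤ p−1; in particular λ_0 = 1. -/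
/-!
Dwork's proof. The series `L = Σ X^(pⁱ)/pⁱ` satisfies `L = X + L(Xᵖ)/p`, so `D = L'` satisfies
`D = 1 + Xᵖ⁻¹ D(Xᵖ)`. Hence `E(X)ᵖ` and `E(Xᵖ) exp(X)ᵖ` both solve `y' = p D y` and are equal.
The coefficients `pⁿ/n!` (`n ≥ 1`) of `exp(X)ᵖ = exp(pX)` lie in `pℤ_p`, and an induction on `m`
(Dieudonné–Dwork) shows that every coefficient `eₘ` of `E` lies in `ℤ_p`: in the `m`-th coefficient
of `E(X)ᵖ = E(Xᵖ) exp(pX)` the unknown `eₘ` occurs only as `p eₘ`, and the remaining terms cancel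
modulo `p` because `A(X)ᵖ ≡ A(Xᵖ) mod p` for polynomials `A` over `ℤ_p`. Thus
`‖λₘ‖ = ‖eₘ‖ ‖γ‖ᵐ ≤ ‖γ‖ᵐ`. Finally `D ≡ 1 mod Xᵖ⁻¹` gives `E ≡ exp mod Xᵖ`.
-/

open scoped Classical

namespace PowerSeries

theorem eq_of_derivative_eq_mul {R : Type*} [CommRing R] [IsAddTorsionFree R] {a f g : R⟦X⟧}
    (hf : d⁄dX R f = a * f) (hg : d⁄dX R g = a * g) (h0 : constantCoeff f = constantCoeff g) :
    f = g := by
  ext m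
  induction m using Nat.strong_induction_on with
  | _ m ih =>
    rcases m with _ | n
    · simpa using h0
    · have h : (n + 1) • coeff (n + 1) f = (n + 1) • coeff (n + 1) g := by
        rw [nsmul_eq_mul', nsmul_eq_mul', Nat.cast_succ, ← coeff_derivative, ← coeff_derivative,
          hf, hg, coeff_mul, coeff_mul]
        refine Finset.sum_congr rfl fun x hx => ?_
        rw [ih x.2 (by grind [Finset.HasAntidiagonal.mem_antidiagonal])]
      exact nsmul_right_injective n.succ_ne_zero h

theorem derivative_expand {R : Type*} [CommRing R] (p : ℕ) (hp : p ≠ 0) (f : R⟦X⟧) :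
    d⁄dX R (expand p hp f) = (p : R⟦X⟧) * X ^ (p - 1) * expand p hp (d⁄dX R f) := by
  rw [expand_apply, expand_apply, derivative_subst (HasSubst.X_pow hp), derivative_pow,
    derivative_X, mul_one, mul_comm]

theorem coeff_pow_eq_coeff_trunc_pow_add {R : Type*} [CommRing R] (f : R⟦X⟧) (n : ℕ) {m : ℕ}
    (hm : m ≠ 0) :
    coeff m (f ^ n) =
      coeff m ((trunc m f : R⟦X⟧) ^ n) + n * constantCoeff f ^ (n - 1) * coeff m f := by
  set T : R⟦X⟧ := (trunc m f : R⟦X⟧)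
  set S : R⟦X⟧ := mk fun i => coeff (i + m) f
  obtain ⟨c, hc⟩ := sq_dvd_add_pow_sub_sub (X ^ m * S) T n
  have hf : f = T + X ^ m * S := by rw [add_comm]; exact eq_X_pow_mul_shift_add_trunc m f
  have hconst : constantCoeff T = constantCoeff f := by
    rw [← coeff_zero_eq_constantCoeff_apply, ← coeff_zero_eq_constantCoeff_apply,
      Polynomial.coeff_coe, coeff_trunc, if_pos (Nat.pos_of_ne_zero hm)]
  have hexp : f ^ n =
      T ^ n + X ^ m * (T ^ (n - 1) * S * (n : R⟦X⟧)) + X ^ (m + m) * (S ^ 2 * c) := by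
    rw [hf]; linear_combination hc
  simp [hexp, coeff_X_pow_mul', hconst, S, hm]
  ring

theorem norm_coeff_mul_le {R : Type*} [NormedRing R] [IsUltrametricDist R] {f g : R⟦X⟧} {m : ℕ}
    {a b : ℝ} (hf : ∀ i ≤ m, ‖coeff i f‖ ≤ a) (hg : ∀ j ≤ m, ‖coeff j g‖ ≤ b) :
    ‖coeff m (f * g)‖ ≤ a * b := by
  have ha : 0 ≤ a := (norm_nonneg _).trans (hf 0 m.zero_le)
  have hb : 0 ≤ b := (norm_nonneg _).trans (hg 0 m.zero_le)
  rw [coeff_mul]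
  refine IsUltrametricDist.norm_sum_le_of_forall_le_of_nonneg (mul_nonneg ha hb) fun x hx => ?_
  rw [Finset.HasAntidiagonal.mem_antidiagonal] at hx
  exact (norm_mul_le _ _).trans
    (mul_le_mul (hf _ (by omega)) (hg _ (by omega)) (norm_nonneg _) ha)

theorem natCast_mul_coeff_eq_of_pow_eq_expand_mul {R : Type*} [CommRing R] {p : ℕ} (hp : 1 < p)
    {F G : R⟦X⟧} (hF0 : constantCoeff F = 1) (hFG : F ^ p = expand p (by omega) F * G) {m : ℕ}
    (hm : m ≠ 0) :
    (p : R) * coeff m F = coeff m (expand p (by omega) F * (G - 1)) -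
      (trunc m F ^ p - Polynomial.expand R p (trunc m F)).coeff m := by
  have hexpand : (Polynomial.expand R p (trunc m F)).coeff m = coeff m (expand p (by omega) F) := by
    rw [Polynomial.coeff_expand (by omega), coeff_expand]
    split_ifs
    · rw [coeff_trunc, if_pos (Nat.div_lt_self (by omega) hp)]
    · rfl
  have hpow := coeff_pow_eq_coeff_trunc_pow_add F p hm
  rw [hF0, one_pow, mul_one, hFG, ← Polynomial.coe_pow, Polynomial.coeff_coe] at hpow
  rw [mul_sub, mul_one, map_sub, Polynomial.coeff_sub, hexpand, hpow]
  ring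

theorem pow_eq_expand_mul_exp_pow {K : Type*} [Field K] [CharZero K] {p : ℕ} (hp : p ≠ 0)
    {D E : K⟦X⟧} (hD : D = 1 + X ^ (p - 1) * expand p hp D) (hE0 : constantCoeff E = 1)
    (hE : d⁄dX K E = D * E) : E ^ p = expand p hp E * exp K ^ p := by
  obtain ⟨q, rfl⟩ : ∃ q, p = q + 1 := ⟨p - 1, by omega⟩
  rw [Nat.add_sub_cancel] at hD
  apply eq_of_derivative_eq_mul (a := ((q + 1 : ℕ) : K⟦X⟧) * D)
  · rw [derivative_pow, hE, Nat.add_sub_cancel]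
    ring
  · rw [Derivation.leibniz, derivative_pow, derivative_exp, derivative_expand, hE, map_mul,
      Nat.add_sub_cancel, smul_eq_mul, smul_eq_mul]
    linear_combination (-((q + 1 : ℕ) : K⟦X⟧) * expand (q + 1) hp E * exp K ^ (q + 1)) * hD
  · simp [hE0, constantCoeff_exp]

theorem coeff_eq_inv_factorial_of_derivative_eq_mul {K : Type*} [Field K] [CharZero K] {N : ℕ}
    {D E : K⟦X⟧} (hD : X ^ N ∣ D - 1) (hE0 : constantCoeff E = 1) (hE : d⁄dX K E = D * E)
    {m : ℕ} (hm : m ≤ N) : coeff m E = (m.factorial : K)⁻¹ := by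
  induction m with
  | zero => simp [hE0]
  | succ n ih =>
    have hrec : coeff (n + 1) E * (n + 1) = coeff n E := by
      have hlow := X_pow_dvd_iff.mp (dvd_mul_of_dvd_left hD E) n (by omega)
      rw [← coeff_derivative, hE, ← sub_eq_zero, ← map_sub, ← sub_one_mul, hlow]
    rw [ih (by omega)] at hrec
    rw [Nat.factorial_succ, Nat.cast_mul, mul_inv, ← hrec, Nat.cast_succ]
    field_simp

/-- `Σᵢ X^(pⁱ) / pⁱ`, the logarithm of the Artin–Hasse exponential. -/
noncomputable def artinHasseLog (p : ℕ) : ℚ⟦X⟧ :=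
  mk fun m => if h : ∃ i : ℕ, p ^ i = m then (1 : ℚ) / (p ^ Nat.find h) else 0

section artinHasseLog

variable {p : ℕ}

theorem coeff_artinHasseLog_pow (hp : 1 < p) (i : ℕ) :
    coeff (p ^ i) (artinHasseLog p) = ((p : ℚ) ^ i)⁻¹ := by
  have h : ∃ j : ℕ, p ^ j = p ^ i := ⟨i, rfl⟩
  rw [artinHasseLog, coeff_mk, dif_pos h, Nat.pow_right_injective hp (Nat.find_spec h), one_div]

theorem coeff_artinHasseLog_of_forall_pow_ne {m : ℕ} (h : ∀ i, p ^ i ≠ m) :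
    coeff m (artinHasseLog p) = 0 := by
  rw [artinHasseLog, coeff_mk, dif_neg (not_exists.mpr h)]

theorem artinHasseLog_eq_X_add_expand (hp : 1 < p) :
    artinHasseLog p = X + C (p : ℚ)⁻¹ * expand p (by omega) (artinHasseLog p) := by
  ext m
  rw [map_add, coeff_C_mul, coeff_X]
  by_cases hm : ∃ i, p ^ i = m
  · obtain ⟨_ | i, rfl⟩ := hm
    · rw [pow_zero, coeff_expand_of_not_dvd _ _ _ (by rw [Nat.dvd_one]; omega), if_pos rfl]
      simpa using coeff_artinHasseLog_pow hp 0
    · rw [coeff_artinHasseLog_pow hp, if_neg (Nat.one_lt_pow (by omega) hp).ne', Nat.pow_succ',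
        coeff_expand_mul, coeff_artinHasseLog_pow hp, pow_succ', mul_inv, zero_add]
  · push Not at hm
    rw [coeff_artinHasseLog_of_forall_pow_ne hm, if_neg (by simpa using (hm 0).symm),
      coeff_expand]
    split_ifs with hdvd
    · obtain ⟨k, rfl⟩ := hdvd
      rw [Nat.mul_div_cancel_left _ (by omega), coeff_artinHasseLog_of_forall_pow_ne, mul_zero,
        zero_add]
      rintro i rfl
      exact hm (i + 1) (pow_succ' p i)
    · simp

theorem derivative_artinHasseLog (hp : 1 < p) :
    d⁄dX ℚ (artinHasseLog p) =
      1 + X ^ (p - 1) * expand p (by omega) (d⁄dX ℚ (artinHasseLog p)) := by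
  conv_lhs => rw [artinHasseLog_eq_X_add_expand hp]
  rw [map_add, derivative_X, ← smul_eq_C_mul, Derivation.map_smul, derivative_expand,
    smul_eq_C_mul, ← mul_assoc, ← mul_assoc, ← map_natCast C, ← map_mul,
    inv_mul_cancel₀ (by positivity), map_one, one_mul]

end artinHasseLog

end PowerSeries

open PowerSeries

theorem PadicInt.norm_le_inv_of_dvd {p : ℕ} [Fact p.Prime] {x : ℤ_[p]} (hx : (p : ℤ_[p]) ∣ x) :
    ‖x‖ ≤ (p : ℝ)⁻¹ := by
  obtain ⟨y, rfl⟩ := hx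
  rw [norm_mul, PadicInt.norm_p]
  exact mul_le_of_le_one_right (by positivity) y.norm_le_one

namespace Padic

variable {p : ℕ} [hp : Fact p.Prime]

theorem norm_coeff_pow_sub_expand_le (A : Polynomial ℚ_[p]) (hA : ∀ n, ‖A.coeff n‖ ≤ 1)
    (k : ℕ) : ‖(A ^ p - Polynomial.expand ℚ_[p] p A).coeff k‖ ≤ (p : ℝ)⁻¹ := by
  obtain ⟨B, rfl⟩ : A ∈ Polynomial.lifts (PadicInt.Coe.ringHom (p := p)) :=
    (Polynomial.lifts_iff_coeff_lifts A).mpr fun n => ⟨⟨A.coeff n, hA n⟩, rfl⟩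
  have hfrob : (B ^ p - Polynomial.expand ℤ_[p] p B).map (PadicInt.toZMod (p := p)) = 0 := by
    rw [Polynomial.map_sub, Polynomial.map_pow, Polynomial.map_expand, ZMod.expand_card, sub_self]
  have hdvd : (p : ℤ_[p]) ∣ (B ^ p - Polynomial.expand ℤ_[p] p B).coeff k := by
    rw [← Ideal.mem_span_singleton, ← PadicInt.maximalIdeal_eq_span_p, ← PadicInt.ker_toZMod,
      RingHom.mem_ker, ← Polynomial.coeff_map, hfrob, Polynomial.coeff_zero]
  rw [Polynomial.coe_mapRingHom, ← Polynomial.map_pow, ← Polynomial.map_expand,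
    ← Polynomial.map_sub, Polynomial.coeff_map]
  exact PadicInt.norm_le_inv_of_dvd hdvd

theorem norm_coeff_exp_pow_le {n : ℕ} (hn : n ≠ 0) :
    ‖coeff n (exp ℚ_[p] ^ p)‖ ≤ (p : ℝ)⁻¹ := by
  -- `pⁿ / n!` is the `n`-th divided power of `p` for the divided power structure on `pℤ_p`.
  have hmem := (PadicInt.dividedPowers p).dpow_mem hn (Ideal.mem_span_singleton_self (p : ℤ_[p]))
  rw [Ideal.mem_span_singleton] at hmem
  have := PadicInt.norm_le_inv_of_dvd hmem
  rw [PadicInt.norm_def, PadicInt.coe_dpow_eq, dif_pos (Ideal.mem_span_singleton_self _)] at this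
  rw [exp_pow_eq_rescale_exp, coeff_rescale, coeff_exp]
  convert this using 2
  simp [Ring.inverse_eq_inv', mul_comm]

theorem norm_coeff_le_one_of_pow_eq_expand_mul {F G : ℚ_[p]⟦X⟧} (hF0 : constantCoeff F = 1)
    (hFG : F ^ p = expand p hp.out.ne_zero F * G) (hG : ∀ n ≠ 0, ‖coeff n G‖ ≤ (p : ℝ)⁻¹)
    (m : ℕ) : ‖coeff m F‖ ≤ 1 := by
  induction m using Nat.strong_induction_on with
  | _ m ih =>
  rcases eq_or_ne m 0 with rfl | hm
  · simp [hF0]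
  set T := trunc m F
  have hT : ∀ n, ‖T.coeff n‖ ≤ 1 := fun n => by
    rw [coeff_trunc]; split_ifs with h
    exacts [ih n h, by simp]
  have hexpandF : ∀ i ≤ m, ‖coeff i (expand p hp.out.ne_zero F)‖ ≤ 1 := fun i hi => by
    rw [coeff_expand]; split_ifs
    exacts [ih _ ((Nat.div_le_div_right hi).trans_lt (Nat.div_lt_self (by omega) hp.out.one_lt)),
      by simp]
  have hG0 : constantCoeff G = 1 := by
    simpa [hF0] using (congrArg constantCoeff hFG).symm
  have hG1 : ∀ j ≤ m, ‖coeff j (G - 1)‖ ≤ (p : ℝ)⁻¹ := fun j _ => by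
    rcases eq_or_ne j 0 with rfl | hj
    · simp [hG0]
    · simpa [coeff_one, hj] using hG j hj
  have hnorm : ‖(p : ℚ_[p]) * coeff m F‖ ≤ (p : ℝ)⁻¹ := by
    rw [natCast_mul_coeff_eq_of_pow_eq_expand_mul hp.out.one_lt hF0 hFG hm, sub_eq_add_neg]
    refine (IsUltrametricDist.norm_add_le_max _ _).trans (max_le ?_ ?_)
    · simpa using norm_coeff_mul_le hexpandF hG1
    · rw [norm_neg]
      exact norm_coeff_pow_sub_expand_le T hT m
  rw [norm_mul, Padic.norm_p] at hnorm
  exact (mul_le_iff_le_one_right (inv_pos.mpr (Nat.cast_pos.mpr hp.out.pos))).mp hnorm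

end Padic

theorem artin_hasse_coefficients_general (p : ℕ) [hp : Fact p.Prime]
    (K : Type*) [NontriviallyNormedField K]
    (hK : ∀ q : ℚ, ‖(q : K)‖ = ‖(q : ℚ_[p])‖)
    (L : PowerSeries ℚ)
    (hL : ∀ m : ℕ, PowerSeries.coeff m L =
      if h : ∃ i : ℕ, p ^ i = m then (1 : ℚ) / (p ^ Nat.find h) else 0)
    (E : PowerSeries ℚ)
    (hE0 : PowerSeries.constantCoeff E = 1)
    (hE : PowerSeries.derivative ℚ E = PowerSeries.derivative ℚ L * E)
    (γ : K)
    (hγord : ‖γ‖ = (p : ℝ) ^ (-(1 : ℝ) / ((p : ℝ) - 1)))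
    (lam : ℕ → K)
    (hlam : ∀ m : ℕ, lam m = ((PowerSeries.coeff m E : ℚ) : K) * γ ^ m) :
    (∀ m : ℕ, ‖lam m‖ ≤ (p : ℝ) ^ (-(m : ℝ) / ((p : ℝ) - 1))) ∧
    (∀ m : ℕ, m ≤ p - 1 → lam m = γ ^ m / (m.factorial : K)) ∧
    lam 0 = 1 := by
  obtain rfl : L = artinHasseLog p := ext fun m => by rw [hL, artinHasseLog, coeff_mk]
  have hD := derivative_artinHasseLog hp.out.one_lt
  have hdwork := pow_eq_expand_mul_exp_pow hp.out.ne_zero hD hE0 hE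
  have hF0 : constantCoeff (map (Rat.castHom ℚ_[p]) E) = 1 := by
    rw [← coeff_zero_eq_constantCoeff_apply, coeff_map, coeff_zero_eq_constantCoeff_apply, hE0,
      map_one]
  have hFG : map (Rat.castHom ℚ_[p]) E ^ p =
      expand p hp.out.ne_zero (map (Rat.castHom ℚ_[p]) E) * exp ℚ_[p] ^ p := by
    rw [← map_exp (Rat.castHom ℚ_[p]), ← map_pow, ← map_expand, ← map_pow, ← map_mul]
    -- not `rw [hdwork]`: its `exp ℚ` uses another (defeq) `Algebra ℚ ℚ` instance
    exact congrArg _ hdwork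
  have hint (m : ℕ) : ‖((coeff m E : ℚ) : ℚ_[p])‖ ≤ 1 := by
    simpa using Padic.norm_coeff_le_one_of_pow_eq_expand_mul hF0 hFG
      (fun n hn => Padic.norm_coeff_exp_pow_le hn) m
  have hsmall (m : ℕ) (hm : m ≤ p - 1) : coeff m E = (m.factorial : ℚ)⁻¹ :=
    coeff_eq_inv_factorial_of_derivative_eq_mul (Dvd.intro _ (sub_eq_iff_eq_add'.mpr hD).symm)
      hE0 hE hm
  refine ⟨fun m => ?_, fun m hm => ?_, ?_⟩
  · calc ‖lam m‖ = ‖((coeff m E : ℚ) : ℚ_[p])‖ * ‖γ‖ ^ m := by rw [hlam, norm_mul, hK, norm_pow]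
      _ ≤ ‖γ‖ ^ m := mul_le_of_le_one_left (by positivity) (hint m)
      _ = (p : ℝ) ^ (-(m : ℝ) / ((p : ℝ) - 1)) := by
        rw [hγord, ← Real.rpow_natCast, ← Real.rpow_mul (by positivity)]
        ring_nf
  · rw [hlam, hsmall m hm, Rat.cast_inv_nat, inv_mul_eq_div]
  · rw [hlam, hsmall 0 (Nat.zero_le _)]
    simp

/-- Let `E(x) = exp(Σ_{i≥0} x^{pⁱ}/pⁱ)` be the `p`-adic Artin–Hasse exponential
(characterized over `ℚ` by `E(0) = 1` and `E' = L'·E` for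
`L = Σ_{i≥0} x^{pⁱ}/pⁱ`), and let `γ` be a root of `log E(x) = 0`
(i.e. `Σ_{i≥0} γ^{pⁱ}/pⁱ = 0`) with `ord_p(γ) = 1/(p−1)` in a normed field `K`
whose norm restricts to the `p`-adic norm on `ℚ`. Writing
`E(γx) = Σ_{m≥0} λ_m x^m`, one has `ord_p(λ_m) ≥ m/(p−1)` for all `m ≥ 0`, and
`λ_m = γ^m/m!` for `0 ≤ m ≤ p−1`; in particular `λ₀ = 1`. -/
theorem artin_hasse_coefficients (p : ℕ) [hp : Fact p.Prime]
    (K : Type*) [NontriviallyNormedField K]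
    (hK : ∀ q : ℚ, ‖(q : K)‖ = ‖(q : ℚ_[p])‖)
    (L : PowerSeries ℚ)
    (hL : ∀ m : ℕ, PowerSeries.coeff m L =
      if h : ∃ i : ℕ, p ^ i = m then (1 : ℚ) / (p ^ Nat.find h) else 0)
    (E : PowerSeries ℚ)
    (hE0 : PowerSeries.constantCoeff E = 1)
    (hE : PowerSeries.derivative ℚ E = PowerSeries.derivative ℚ L * E)
    (γ : K)
    (hγroot : HasSum (fun i : ℕ => γ ^ (p ^ i) / (p : K) ^ i) 0)
    (hγord : ‖γ‖ = (p : ℝ) ^ (-(1 : ℝ) / ((p : ℝ) - 1)))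
    (lam : ℕ → K)
    (hlam : ∀ m : ℕ, lam m = ((PowerSeries.coeff m E : ℚ) : K) * γ ^ m) :
    (∀ m : ℕ, ‖lam m‖ ≤ (p : ℝ) ^ (-(m : ℝ) / ((p : ℝ) - 1))) ∧
    (∀ m : ℕ, m ≤ p - 1 → lam m = γ ^ m / (m.factorial : K)) ∧
    lam 0 = 1 :=
  artin_hasse_coefficients_general p (hp := hp) K hK L hL E hE0 hE γ hγord lam hlam
end
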